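/- arXiv:1904.12908 — 2 statements merged into one kernel-verified Lean document; each statement's English description precedes it below -/
import Mathlib

section
/- Let H be a Hilbert space and let A, B : H → H be bounded self-adjoint operators with A coercive and B compact, non-negative, and with nontrivial range. Then the generalized eigenvalue problem A u = λ B u has positive generalized eigenvalues characterized by the min-max principle: λ_j = min over j-dimensional subspaces U ⊂ H with U ∩ Null(B) = {0} of max over nonzero u ∈ U of (Au,u)/(Bu,u). -/
/-!
With `T = A⁻¹ B`, which is compact and self-adjoint for the inner product `⟪A ·, ·⟫`, the
generalized eigenvectors are built one at a time. On the `A`-orthogonal complement `V` of the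
eigenvectors already found, `V` is `T`-invariant and the ratio `⟪B u, u⟫ / ⟪A u, u⟫` attains its
supremum `μ`: along a normalized maximizing sequence `T uₙ - μ uₙ → 0`, and compactness of `B`
yields a convergent subsequence. The maximizer is then an eigenvector, `B e = μ A e`.

After `j` steps we have `A`-orthonormal `E₀, …, E_{j-1}` with decreasing `μ₀ ≥ … ≥ μ_{j-1} > 0`.
On their span `⟪A u, u⟫ / ⟪B u, u⟫ ≤ 1 / μ_{j-1}`, with equality at `E_{j-1}`. Every
`j`-dimensional `U` with `U ∩ ker B = 0` contains `u ≠ 0` that is `A`-orthogonal to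
`E₀, …, E_{j-2}`, and for that `u` we get `⟪A u, u⟫ / ⟪B u, u⟫ ≥ 1 / μ_{j-1}`. Hence the min-max
value is `1 / μ_{j-1}`, and `A E_{j-1} = (1 / μ_{j-1}) B E_{j-1}`.
-/

open scoped InnerProductSpace
open Filter Topology

theorem exists_ne_zero_mem_forall_eq_zero {K V : Type*} [Field K] [AddCommGroup V] [Module K V]
    {U : Submodule K V} [FiniteDimensional K U] {ι : Type*} (s : Finset ι)
    (hs : s.card < Module.finrank K U) (f : ι → V →ₗ[K] K) :
    ∃ u ∈ U, u ≠ 0 ∧ ∀ i ∈ s, f i u = 0 := by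
  let Φ : U →ₗ[K] (s → K) := LinearMap.pi fun i ↦ (f i).comp U.subtype
  obtain ⟨x, hx, hx0⟩ := (Submodule.ne_bot_iff _).mp <|
    LinearMap.ker_ne_bot_of_finrank_lt (f := Φ) (by simpa using hs)
  refine ⟨x, x.2, by simpa using hx0, fun i hi ↦ ?_⟩
  exact congrFun (LinearMap.mem_ker.mp hx) ⟨i, hi⟩

section

variable {H : Type*} [NormedAddCommGroup H] [InnerProductSpace ℝ H]
variable {A B C : H →L[ℝ] H} {δ : ℝ}

theorem real_inner_apply_smul_self (C : H →L[ℝ] H) (c : ℝ) (u : H) :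
    ⟪C (c • u), c • u⟫_ℝ = c ^ 2 * ⟪C u, u⟫_ℝ := by
  rw [map_smul, real_inner_smul_left, real_inner_smul_right]; ring

theorem real_inner_apply_self_le (C : H →L[ℝ] H) (u : H) : ⟪C u, u⟫_ℝ ≤ ‖C‖ * ‖u‖ ^ 2 :=
  calc ⟪C u, u⟫_ℝ ≤ ‖C u‖ * ‖u‖ := real_inner_le_norm _ _
    _ ≤ ‖C‖ * ‖u‖ * ‖u‖ := by gcongr; exact C.le_opNorm u
    _ = ‖C‖ * ‖u‖ ^ 2 := by ring

theorem real_inner_apply_self_pos_of_coercive (hδ : 0 < δ)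
    (hcoer : ∀ u : H, δ * ‖u‖ ^ 2 ≤ ⟪A u, u⟫_ℝ) {u : H} (hu : u ≠ 0) : 0 < ⟪A u, u⟫_ℝ :=
  (hcoer u).trans_lt' (by positivity)

def rayleighQuotients (A B : H →L[ℝ] H) (U : Submodule ℝ H) : Set ℝ :=
  {q | ∃ u ∈ U, u ≠ 0 ∧ q = ⟪A u, u⟫_ℝ / ⟪B u, u⟫_ℝ}

theorem exists_seq_tendsto_sSup_real_inner (hδ : 0 < δ)
    (hcoer : ∀ u : H, δ * ‖u‖ ^ 2 ≤ ⟪A u, u⟫_ℝ) {V : Submodule ℝ H}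
    (hV : ∃ u ∈ V, 0 < ⟪B u, u⟫_ℝ) :
    ∃ M, 0 < M ∧ (∀ u ∈ V, ⟪B u, u⟫_ℝ ≤ M * ⟪A u, u⟫_ℝ) ∧
      ∃ u : ℕ → H, (∀ n, u n ∈ V ∧ ⟪A (u n), u n⟫_ℝ = 1) ∧
        Tendsto (fun n ↦ ⟪B (u n), u n⟫_ℝ) atTop (𝓝 M) := by
  set S : Set ℝ := {r | ∃ u ∈ V, ⟪A u, u⟫_ℝ = 1 ∧ ⟪B u, u⟫_ℝ = r}
  have hratio : ∀ u ∈ V, u ≠ 0 → ⟪B u, u⟫_ℝ / ⟪A u, u⟫_ℝ ∈ S := by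
    intro u hu hu0
    have hA := real_inner_apply_self_pos_of_coercive hδ hcoer hu0
    have hc : (√⟪A u, u⟫_ℝ)⁻¹ ^ 2 = (⟪A u, u⟫_ℝ)⁻¹ := by rw [inv_pow, Real.sq_sqrt hA.le]
    refine ⟨(√⟪A u, u⟫_ℝ)⁻¹ • u, V.smul_mem _ hu, ?_, ?_⟩
    · rw [real_inner_apply_smul_self, hc, inv_mul_cancel₀ hA.ne']
    · rw [real_inner_apply_smul_self, hc, inv_mul_eq_div]
  have hbdd : BddAbove S := by
    refine ⟨‖B‖ / δ, ?_⟩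
    rintro _ ⟨u, -, hAu, rfl⟩
    rw [le_div_iff₀ hδ]
    have := hcoer u
    nlinarith [real_inner_apply_self_le B u, norm_nonneg B]
  obtain ⟨u₀, hu₀, hBu₀⟩ := hV
  have hu₀0 : u₀ ≠ 0 := by rintro rfl; simp at hBu₀
  have hM : 0 < sSup S := (le_csSup hbdd (hratio u₀ hu₀ hu₀0)).trans_lt' <|
    div_pos hBu₀ (real_inner_apply_self_pos_of_coercive hδ hcoer hu₀0)
  refine ⟨sSup S, hM, fun u hu ↦ ?_, ?_⟩
  · rcases eq_or_ne u 0 with rfl | hu0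
    · simp
    · rw [← div_le_iff₀ (real_inner_apply_self_pos_of_coercive hδ hcoer hu0)]
      exact le_csSup hbdd (hratio u hu hu0)
  · obtain ⟨r, -, hr, hrS⟩ := exists_seq_tendsto_sSup ⟨_, hratio u₀ hu₀ hu₀0⟩ hbdd
    choose u hu hAu hBu using hrS
    exact ⟨u, fun n ↦ ⟨hu n, hAu n⟩, by simpa only [hBu] using hr⟩

structure IsRayleighEigenfamily (A B : H →L[ℝ] H) {k : ℕ} (E : Fin k → H) (μ : Fin k → ℝ) :
    Prop where
  pos : ∀ i, 0 < μ i
  orthonormal : ∀ i i', ⟪A (E i), E i'⟫_ℝ = if i = i' then 1 else 0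
  apply_eq : ∀ i, B (E i) = μ i • A (E i)
  real_inner_le : ∀ i u, (∀ i' < i, ⟪A (E i'), u⟫_ℝ = 0) → ⟪B u, u⟫_ℝ ≤ μ i * ⟪A u, u⟫_ℝ

namespace IsRayleighEigenfamily

section
variable {k : ℕ} {E : Fin k → H} {μ : Fin k → ℝ}

theorem ne_zero (hE : IsRayleighEigenfamily A B E μ) (i : Fin k) : E i ≠ 0 := by
  intro h
  simpa [h] using hE.orthonormal i i

theorem antitone (hE : IsRayleighEigenfamily A B E μ) : Antitone μ := by
  intro i i' hii'
  have h := hE.real_inner_le i (E i') fun i'' hi'' ↦ by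
    rw [hE.orthonormal, if_neg (hi''.trans_le hii').ne]
  rwa [hE.apply_eq, real_inner_smul_left, hE.orthonormal, if_pos rfl, mul_one, mul_one] at h

theorem real_inner_sum_smul (hE : IsRayleighEigenfamily A B E μ) (c : Fin k → ℝ) (i : Fin k) :
    ⟪A (E i), ∑ j, c j • E j⟫_ℝ = c i := by
  simp [inner_sum, real_inner_smul_right, hE.orthonormal]

theorem linearIndependent (hE : IsRayleighEigenfamily A B E μ) : LinearIndependent ℝ E := by
  refine Fintype.linearIndependent_iff.mpr fun c hc i ↦ ?_
  simpa [hc] using (hE.real_inner_sum_smul c i).symm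

theorem mul_real_inner_le_of_mem_span (hE : IsRayleighEigenfamily A B E μ)
    {m : ℝ} (hm : ∀ i, m ≤ μ i) {u : H} (hu : u ∈ Submodule.span ℝ (Set.range E)) :
    m * ⟪A u, u⟫_ℝ ≤ ⟪B u, u⟫_ℝ := by
  obtain ⟨c, rfl⟩ := (Submodule.mem_span_range_iff_exists_fun ℝ).mp hu
  have hBu : B (∑ i, c i • E i) = A (∑ i, (μ i * c i) • E i) := by
    simp [hE.apply_eq, smul_smul, mul_comm]
  have hform : ∀ a : Fin k → ℝ, ⟪A (∑ i, a i • E i), ∑ i, c i • E i⟫_ℝ = ∑ i, a i * c i := by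
    intro a
    simp [sum_inner, real_inner_smul_left, hE.real_inner_sum_smul]
  rw [hBu, hform, hform, Finset.mul_sum]
  exact Finset.sum_le_sum fun i _ ↦ by nlinarith [hm i, mul_self_nonneg (c i)]

end

variable {n : ℕ} {E : Fin (n + 1) → H} {μ : Fin (n + 1) → ℝ}

theorem mul_real_inner_le_of_mem_span_last (hE : IsRayleighEigenfamily A B E μ) {u : H}
    (hu : u ∈ Submodule.span ℝ (Set.range E)) : μ (Fin.last n) * ⟪A u, u⟫_ℝ ≤ ⟪B u, u⟫_ℝ :=
  hE.mul_real_inner_le_of_mem_span (fun i ↦ hE.antitone (Fin.le_last i)) hu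

theorem span_inf_ker_eq_bot (hE : IsRayleighEigenfamily A B E μ) (hδ : 0 < δ)
    (hcoer : ∀ u : H, δ * ‖u‖ ^ 2 ≤ ⟪A u, u⟫_ℝ) :
    Submodule.span ℝ (Set.range E) ⊓ LinearMap.ker (B : H →ₗ[ℝ] H) = ⊥ := by
  refine (Submodule.eq_bot_iff _).mpr fun u ⟨hu, hBu⟩ ↦ by_contra fun hu0 ↦ ?_
  have h := hE.mul_real_inner_le_of_mem_span_last hu
  rw [show B u = 0 from hBu, inner_zero_left] at h
  exact h.not_gt (mul_pos (hE.pos _) (real_inner_apply_self_pos_of_coercive hδ hcoer hu0))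

theorem sSup_rayleighQuotients_span (hE : IsRayleighEigenfamily A B E μ) (hδ : 0 < δ)
    (hcoer : ∀ u : H, δ * ‖u‖ ^ 2 ≤ ⟪A u, u⟫_ℝ) :
    sSup (rayleighQuotients A B (Submodule.span ℝ (Set.range E))) = (μ (Fin.last n))⁻¹ := by
  refine IsGreatest.csSup_eq
    ⟨⟨E (Fin.last n), Submodule.subset_span ⟨_, rfl⟩, hE.ne_zero _, ?_⟩, ?_⟩
  · rw [hE.apply_eq, real_inner_smul_left, hE.orthonormal, if_pos rfl, mul_one, one_div]
  · rintro _ ⟨u, hu, hu0, rfl⟩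
    have hAu := real_inner_apply_self_pos_of_coercive hδ hcoer hu0
    have hle := hE.mul_real_inner_le_of_mem_span_last hu
    have hBu : 0 < ⟪B u, u⟫_ℝ := hle.trans_lt' (mul_pos (hE.pos _) hAu)
    rw [div_le_iff₀ hBu, inv_mul_eq_div, le_div_iff₀' (hE.pos _)]
    exact hle
end IsRayleighEigenfamily

variable [CompleteSpace H]

theorem IsSelfAdjoint.real_inner_apply_comm (hC : IsSelfAdjoint C) (u v : H) :
    ⟪C u, v⟫_ℝ = ⟪C v, u⟫_ℝ :=
  (hC.isSymmetric u v).trans (real_inner_comm _ _)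

theorem IsSelfAdjoint.real_inner_apply_sq_le (hC : IsSelfAdjoint C) {V : Submodule ℝ H}
    (hV : ∀ u ∈ V, 0 ≤ ⟪C u, u⟫_ℝ) {u v : H} (hu : u ∈ V) (hv : v ∈ V) :
    ⟪C u, v⟫_ℝ ^ 2 ≤ ⟪C u, u⟫_ℝ * ⟪C v, v⟫_ℝ := by
  have hquad : ∀ t : ℝ, 0 ≤ ⟪C v, v⟫_ℝ * (t * t) + 2 * ⟪C u, v⟫_ℝ * t + ⟪C u, u⟫_ℝ := by
    intro t
    have h := hV _ (V.add_mem hu (V.smul_mem t hv))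
    simp only [map_add, map_smul, inner_add_left, inner_add_right, real_inner_smul_left,
      real_inner_smul_right, hC.real_inner_apply_comm v u] at h
    linarith
  have := discrim_le_zero hquad
  rw [discrim] at this
  linarith

theorem IsSelfAdjoint.real_inner_apply_sq_le_of_nonneg (hC : IsSelfAdjoint C)
    (hCnn : ∀ u, 0 ≤ ⟪C u, u⟫_ℝ) (u v : H) : ⟪C u, v⟫_ℝ ^ 2 ≤ ⟪C u, u⟫_ℝ * ⟪C v, v⟫_ℝ :=
  hC.real_inner_apply_sq_le (V := ⊤) (fun u _ ↦ hCnn u) trivial trivial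

theorem IsSelfAdjoint.apply_eq_zero_of_real_inner_self_eq_zero (hC : IsSelfAdjoint C)
    (hCnn : ∀ u, 0 ≤ ⟪C u, u⟫_ℝ) {u : H} (hu : ⟪C u, u⟫_ℝ = 0) : C u = 0 := by
  have h := hC.real_inner_apply_sq_le_of_nonneg hCnn u (C u)
  rw [hu, zero_mul, sq_nonpos_iff, inner_self_eq_zero] at h
  exact h

theorem real_inner_apply_self_pos_of_inf_ker_eq_bot (hB : IsSelfAdjoint B)
    (hBnn : ∀ u, 0 ≤ ⟪B u, u⟫_ℝ) {U : Submodule ℝ H}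
    (hU : U ⊓ LinearMap.ker (B : H →ₗ[ℝ] H) = ⊥) {u : H} (hu : u ∈ U) (hu0 : u ≠ 0) :
    0 < ⟪B u, u⟫_ℝ := by
  refine (hBnn u).lt_of_ne fun h ↦ hu0 ?_
  have hmem : u ∈ U ⊓ LinearMap.ker (B : H →ₗ[ℝ] H) :=
    ⟨hu, hB.apply_eq_zero_of_real_inner_self_eq_zero hBnn h.symm⟩
  rwa [hU, Submodule.mem_bot] at hmem

theorem exists_continuousLinearEquiv_of_coercive (hδ : 0 < δ)
    (hcoer : ∀ u : H, δ * ‖u‖ ^ 2 ≤ ⟪A u, u⟫_ℝ) : ∃ A' : H ≃L[ℝ] H, ⇑A' = ⇑A := by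
  have hunit : IsUnit A := by
    refine ContinuousLinearMap.isUnit_of_forall_le_norm_inner_map A (c := ⟨δ, hδ.le⟩) hδ
      fun x ↦ ?_
    rw [mul_comm]
    exact (hcoer x).trans (Real.le_norm_self _)
  exact ⟨ContinuousLinearEquiv.unitsEquiv ℝ H hunit.unit, rfl⟩

theorem bddAbove_rayleighQuotients (hB : IsSelfAdjoint B) (hBnn : ∀ u, 0 ≤ ⟪B u, u⟫_ℝ)
    {U : Submodule ℝ H} [FiniteDimensional ℝ U] (hU : U ⊓ LinearMap.ker (B : H →ₗ[ℝ] H) = ⊥) :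
    BddAbove (rayleighQuotients A B U) := by
  set f : U → ℝ := fun x ↦ ⟪A x, x⟫_ℝ / ⟪B x, x⟫_ℝ
  have hcont : ContinuousOn f (Metric.sphere 0 1) := by
    refine ContinuousOn.div (by fun_prop) (by fun_prop) fun x hx ↦ ?_
    refine (real_inner_apply_self_pos_of_inf_ker_eq_bot hB hBnn hU x.2 ?_).ne'
    rintro h
    simp [show x = 0 from Subtype.ext h] at hx
  obtain ⟨C, hC⟩ := (isCompact_sphere (0 : U) 1).bddAbove_image hcont
  refine ⟨C, ?_⟩
  rintro _ ⟨u, hu, hu0, rfl⟩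
  have hx : ‖u‖⁻¹ • (⟨u, hu⟩ : U) ∈ Metric.sphere (0 : U) 1 := by
    simp [norm_smul, hu0]
  refine (le_of_eq ?_).trans (hC ⟨_, hx, rfl⟩)
  show _ = ⟪A (‖u‖⁻¹ • u), ‖u‖⁻¹ • u⟫_ℝ / ⟪B (‖u‖⁻¹ • u), ‖u‖⁻¹ • u⟫_ℝ
  rw [real_inner_apply_smul_self, real_inner_apply_smul_self, mul_div_mul_left _ _ (by positivity)]

theorem real_inner_apply_le_sq_mul_of_apply_eq (hB : IsSelfAdjoint B)
    (hBnn : ∀ u, 0 ≤ ⟪B u, u⟫_ℝ) {V : Submodule ℝ H} {M : ℝ} (hM : 0 ≤ M)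
    (hmax : ∀ u ∈ V, ⟪B u, u⟫_ℝ ≤ M * ⟪A u, u⟫_ℝ) {x y : H} (hx : x ∈ V) (hy : y ∈ V)
    (hxy : A y = B x) : ⟪A y, y⟫_ℝ ≤ M ^ 2 * ⟪A x, x⟫_ℝ := by
  have hcs := hB.real_inner_apply_sq_le_of_nonneg hBnn x y
  rw [show ⟪B x, y⟫_ℝ = ⟪A y, y⟫_ℝ by rw [hxy]] at hcs
  have hx' := hmax x hx
  have hy' := hmax y hy
  have hBx := hBnn x
  have hBy := hBnn y
  rcases le_or_gt ⟪A y, y⟫_ℝ 0 with hs | hs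
  · nlinarith
  · nlinarith [mul_le_mul hx' hy' hBy (by nlinarith)]

theorem mul_norm_sub_smul_sq_le (hA : IsSelfAdjoint A) (hcoer : ∀ u : H, δ * ‖u‖ ^ 2 ≤ ⟪A u, u⟫_ℝ)
    {M : ℝ} {x y : H} (hxy : A y = B x) (hx : ⟪A x, x⟫_ℝ = 1) (hy : ⟪A y, y⟫_ℝ ≤ M ^ 2) :
    δ * ‖y - M • x‖ ^ 2 ≤ 2 * M * (M - ⟪B x, x⟫_ℝ) := by
  have hyx : ⟪A y, x⟫_ℝ = ⟪B x, x⟫_ℝ := by rw [hxy]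
  calc δ * ‖y - M • x‖ ^ 2 ≤ ⟪A (y - M • x), y - M • x⟫_ℝ := hcoer _
    _ = ⟪A y, y⟫_ℝ - 2 * M * ⟪B x, x⟫_ℝ + M ^ 2 := by
      simp only [map_sub, map_smul, inner_sub_left, inner_sub_right, real_inner_smul_left,
        real_inner_smul_right, hA.real_inner_apply_comm x y, hyx, hx]
      ring
    _ ≤ 2 * M * (M - ⟪B x, x⟫_ℝ) := by linarith

theorem apply_eq_smul_of_forall_real_inner_le (hA : IsSelfAdjoint A) (hB : IsSelfAdjoint B)
    (hδ : 0 < δ) (hcoer : ∀ u : H, δ * ‖u‖ ^ 2 ≤ ⟪A u, u⟫_ℝ) {V : Submodule ℝ H}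
    (hVinv : ∀ x ∈ V, ∃ y ∈ V, A y = B x) {M : ℝ}
    (hmax : ∀ u ∈ V, ⟪B u, u⟫_ℝ ≤ M * ⟪A u, u⟫_ℝ) {e : H} (he : e ∈ V)
    (heq : ⟪B e, e⟫_ℝ = M * ⟪A e, e⟫_ℝ) : B e = M • A e := by
  set C := M • A - B
  have hC : IsSelfAdjoint C := ((IsSelfAdjoint.all M).smul hA).sub hB
  have hCapp : ∀ u, ⟪C u, u⟫_ℝ = M * ⟪A u, u⟫_ℝ - ⟪B u, u⟫_ℝ := fun u ↦ by
    simp [C, inner_sub_left, real_inner_smul_left]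
  have hCnn : ∀ u ∈ V, 0 ≤ ⟪C u, u⟫_ℝ := fun u hu ↦ by rw [hCapp]; linarith [hmax u hu]
  -- `z = A⁻¹ C e` lies in `V`, and `⟪C e, z⟫ = 0` since `e` is a zero of the form
  -- `⟪C ·, ·⟫`, which is nonnegative on `V`; coercivity then forces `z = 0`.
  obtain ⟨y, hy, hAy⟩ := hVinv e he
  set z := M • e - y
  have hAz : A z = C e := by simp [z, C, hAy]
  have hCez : ⟪C e, z⟫_ℝ = 0 := by
    have := hC.real_inner_apply_sq_le hCnn he (V.sub_mem (V.smul_mem M he) hy)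
    rwa [hCapp e, heq, sub_self, zero_mul, sq_nonpos_iff] at this
  have hz : z = 0 := by
    by_contra hz
    have := real_inner_apply_self_pos_of_coercive hδ hcoer hz
    rw [hAz, hCez] at this
    exact this.false
  have hCe : M • A e - B e = 0 := by simpa [hz, C] using hAz.symm
  exact (sub_eq_zero.mp hCe).symm

theorem exists_subseq_tendsto_of_tendsto_real_inner (hA : IsSelfAdjoint A)
    (hB : IsSelfAdjoint B) (hδ : 0 < δ) (hcoer : ∀ u : H, δ * ‖u‖ ^ 2 ≤ ⟪A u, u⟫_ℝ)
    (hBnn : ∀ u, 0 ≤ ⟪B u, u⟫_ℝ) (hBcomp : IsCompactOperator B) {V : Submodule ℝ H}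
    (hVinv : ∀ x ∈ V, ∃ y ∈ V, A y = B x) {M : ℝ} (hM : 0 < M)
    (hmax : ∀ u ∈ V, ⟪B u, u⟫_ℝ ≤ M * ⟪A u, u⟫_ℝ) {u : ℕ → H}
    (hu : ∀ n, u n ∈ V ∧ ⟪A (u n), u n⟫_ℝ = 1)
    (hBu : Tendsto (fun n ↦ ⟪B (u n), u n⟫_ℝ) atTop (𝓝 M)) :
    ∃ e, ∃ φ : ℕ → ℕ, StrictMono φ ∧ Tendsto (u ∘ φ) atTop (𝓝 e) := by
  obtain ⟨A', hA'⟩ := exists_continuousLinearEquiv_of_coercive hδ hcoer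
  set y : ℕ → H := fun n ↦ A'.symm (B (u n))
  have hAy : ∀ n, A (y n) = B (u n) := fun n ↦ by
    rw [← hA']; exact A'.apply_symm_apply _
  have hyV : ∀ n, y n ∈ V := fun n ↦ by
    obtain ⟨y', hy', hAy'⟩ := hVinv _ (hu n).1
    rwa [A'.injective (by rw [hA', hAy, hAy'] : A' (y n) = A' y')]
  -- `y n = A⁻¹ B (u n)` is asymptotically `M • u n`, so compactness of `B` transfers to `u`.
  have hclose : Tendsto (fun n ↦ y n - M • u n) atTop (𝓝 0) := by
    have hbound : ∀ n, ‖y n - M • u n‖ ^ 2 ≤ 2 * M * (M - ⟪B (u n), u n⟫_ℝ) / δ := fun n ↦ by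
      rw [le_div_iff₀ hδ, mul_comm]
      refine mul_norm_sub_smul_sq_le hA hcoer (hAy n) (hu n).2 ?_
      simpa [(hu n).2] using
        real_inner_apply_le_sq_mul_of_apply_eq hB hBnn hM.le hmax (hu n).1 (hyV n) (hAy n)
    have hlim : Tendsto (fun n ↦ 2 * M * (M - ⟪B (u n), u n⟫_ℝ) / δ) atTop (𝓝 0) := by
      simpa using (((tendsto_const_nhds (x := M)).sub hBu).const_mul (2 * M)).div_const δ
    have hsq := (squeeze_zero (fun n ↦ by positivity) hbound hlim).sqrt
    simp only [Real.sqrt_sq (norm_nonneg _), Real.sqrt_zero] at hsq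
    exact tendsto_zero_iff_norm_tendsto_zero.mpr hsq
  have hbdd : Bornology.IsBounded (Set.range u) := by
    refine isBounded_iff_forall_norm_le.mpr ⟨1 + δ⁻¹, ?_⟩
    rintro _ ⟨n, rfl⟩
    have h1 : ‖u n‖ ^ 2 ≤ δ⁻¹ := by
      rw [← one_div, le_div_iff₀' hδ, ← (hu n).2]
      exact hcoer _
    nlinarith [norm_nonneg (u n)]
  obtain ⟨K, hK, hBK⟩ := hBcomp.image_subset_compact_of_bounded hbdd
  obtain ⟨z, -, φ, hφ, hz⟩ := hK.tendsto_subseq fun n ↦ hBK ⟨u n, ⟨n, rfl⟩, rfl⟩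
  have hMu : Tendsto (fun n ↦ M • u (φ n)) atTop (𝓝 (A'.symm z)) := by
    simpa [y] using ((A'.symm.continuous.tendsto z).comp hz).sub (hclose.comp hφ.tendsto_atTop)
  refine ⟨M⁻¹ • A'.symm z, φ, hφ, ?_⟩
  simpa [Function.comp_def, smul_smul, inv_mul_cancel₀ hM.ne'] using hMu.const_smul M⁻¹

theorem exists_eigenvector_forall_real_inner_le (hA : IsSelfAdjoint A)
    (hB : IsSelfAdjoint B) (hδ : 0 < δ) (hcoer : ∀ u : H, δ * ‖u‖ ^ 2 ≤ ⟪A u, u⟫_ℝ)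
    (hBnn : ∀ u, 0 ≤ ⟪B u, u⟫_ℝ) (hBcomp : IsCompactOperator B) {V : Submodule ℝ H}
    (hVc : IsClosed (V : Set H)) (hVinv : ∀ x ∈ V, ∃ y ∈ V, A y = B x)
    (hV : ∃ u ∈ V, 0 < ⟪B u, u⟫_ℝ) :
    ∃ e ∈ V, ∃ M, 0 < M ∧ ⟪A e, e⟫_ℝ = 1 ∧ B e = M • A e ∧
      ∀ u ∈ V, ⟪B u, u⟫_ℝ ≤ M * ⟪A u, u⟫_ℝ := by
  obtain ⟨M, hM, hmax, u, hu, hBu⟩ := exists_seq_tendsto_sSup_real_inner hδ hcoer hV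
  obtain ⟨e, φ, hφ, he⟩ := exists_subseq_tendsto_of_tendsto_real_inner hA hB hδ hcoer hBnn
    hBcomp hVinv hM hmax hu hBu
  have heV : e ∈ V := hVc.mem_of_tendsto he (Eventually.of_forall fun n ↦ (hu (φ n)).1)
  have hAe : ⟪A e, e⟫_ℝ = 1 := by
    refine tendsto_nhds_unique (((A.continuous.tendsto e).comp he).inner he) ?_
    simp only [Function.comp_apply, (hu _).2, tendsto_const_nhds]
  have hBe : ⟪B e, e⟫_ℝ = M :=
    tendsto_nhds_unique (((B.continuous.tendsto e).comp he).inner he) (hBu.comp hφ.tendsto_atTop)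
  refine ⟨e, heV, M, hM, hAe, ?_, hmax⟩
  exact apply_eq_smul_of_forall_real_inner_le hA hB hδ hcoer hVinv hmax heV
    (by rw [hBe, hAe, mul_one])

theorem IsRayleighEigenfamily.exists_snoc (hA : IsSelfAdjoint A) (hB : IsSelfAdjoint B)
    (hδ : 0 < δ) (hcoer : ∀ u : H, δ * ‖u‖ ^ 2 ≤ ⟪A u, u⟫_ℝ) (hBnn : ∀ u, 0 ≤ ⟪B u, u⟫_ℝ)
    (hBcomp : IsCompactOperator B) {k : ℕ} {E : Fin k → H} {μ : Fin k → ℝ}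
    (hE : IsRayleighEigenfamily A B E μ)
    (hex : ∃ u, (∀ i, ⟪A (E i), u⟫_ℝ = 0) ∧ 0 < ⟪B u, u⟫_ℝ) :
    ∃ e M, IsRayleighEigenfamily A B (Fin.snoc E e) (Fin.snoc μ M) := by
  set V : Submodule ℝ H := ⨅ i, (ℝ ∙ A (E i))ᗮ
  have hmemV : ∀ u, u ∈ V ↔ ∀ i, ⟪A (E i), u⟫_ℝ = 0 := fun u ↦ by
    simp [V, Submodule.mem_iInf, Submodule.mem_orthogonal_singleton_iff_inner_right]
  have hVc : IsClosed (V : Set H) := by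
    rw [Submodule.coe_iInf]; exact isClosed_iInter fun i ↦ Submodule.isClosed_orthogonal _
  have hVinv : ∀ x ∈ V, ∃ y ∈ V, A y = B x := by
    obtain ⟨A', hA'⟩ := exists_continuousLinearEquiv_of_coercive hδ hcoer
    intro x hx
    have hAy : A (A'.symm (B x)) = B x := by rw [← hA']; exact A'.apply_symm_apply _
    refine ⟨A'.symm (B x), (hmemV _).mpr fun i ↦ ?_, hAy⟩
    rw [hA.real_inner_apply_comm, hAy, hB.real_inner_apply_comm, hE.apply_eq,
      real_inner_smul_left, (hmemV x).mp hx i, mul_zero]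
  obtain ⟨u, hu, hBu⟩ := hex
  obtain ⟨e, he, M, hM, hAe, hBe, hmax⟩ := exists_eigenvector_forall_real_inner_le hA hB hδ
    hcoer hBnn hBcomp hVc hVinv ⟨u, (hmemV u).mpr hu, hBu⟩
  have heV := (hmemV e).mp he
  refine ⟨e, M, ⟨fun i ↦ ?_, fun i i' ↦ ?_, fun i ↦ ?_, fun i u hu ↦ ?_⟩⟩
  · induction i using Fin.lastCases <;> simp [hM, hE.pos]
  · induction i using Fin.lastCases <;> induction i' using Fin.lastCases <;>
      simp [hAe, hE.orthonormal, heV, hA.real_inner_apply_comm e, Fin.castSucc_ne_last,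
        (Fin.castSucc_ne_last _).symm]
  · induction i using Fin.lastCases <;> simp [hBe, hE.apply_eq]
  · induction i using Fin.lastCases with
    | last =>
      rw [Fin.snoc_last]
      refine hmax u ((hmemV u).mpr fun i ↦ ?_)
      simpa using hu i.castSucc (Fin.castSucc_lt_last i)
    | cast i =>
      rw [Fin.snoc_castSucc]
      refine hE.real_inner_le i u fun i' hi' ↦ ?_
      simpa using hu i'.castSucc (Fin.castSucc_lt_castSucc_iff.mpr hi')

theorem exists_isRayleighEigenfamily (hA : IsSelfAdjoint A) (hB : IsSelfAdjoint B)
    (hδ : 0 < δ) (hcoer : ∀ u : H, δ * ‖u‖ ^ 2 ≤ ⟪A u, u⟫_ℝ) (hBnn : ∀ u, 0 ≤ ⟪B u, u⟫_ℝ)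
    (hBcomp : IsCompactOperator B) {U : Submodule ℝ H} [FiniteDimensional ℝ U]
    (hU : U ⊓ LinearMap.ker (B : H →ₗ[ℝ] H) = ⊥) {k : ℕ} (hk : k ≤ Module.finrank ℝ U) :
    ∃ (E : Fin k → H) (μ : Fin k → ℝ), IsRayleighEigenfamily A B E μ := by
  induction k with
  | zero => exact ⟨Fin.elim0, Fin.elim0, by constructor <;> exact fun i ↦ i.elim0⟩
  | succ k ih =>
    obtain ⟨E, μ, hE⟩ := ih (by omega)
    obtain ⟨u, hu, hu0, hperp⟩ := exists_ne_zero_mem_forall_eq_zero Finset.univ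
      (by simpa using hk) fun i ↦ innerₛₗ ℝ (A (E i))
    obtain ⟨e, M, hEe⟩ := hE.exists_snoc hA hB hδ hcoer hBnn hBcomp
      ⟨u, fun i ↦ hperp i (Finset.mem_univ i),
        real_inner_apply_self_pos_of_inf_ker_eq_bot hB hBnn hU hu hu0⟩
    exact ⟨_, _, hEe⟩

theorem IsRayleighEigenfamily.inv_le_sSup_rayleighQuotients {n : ℕ} {E : Fin (n + 1) → H}
    {μ : Fin (n + 1) → ℝ} (hE : IsRayleighEigenfamily A B E μ)
    (hB : IsSelfAdjoint B) (hBnn : ∀ u, 0 ≤ ⟪B u, u⟫_ℝ) {U : Submodule ℝ H}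
    (hUr : Module.finrank ℝ U = n + 1) (hU : U ⊓ LinearMap.ker (B : H →ₗ[ℝ] H) = ⊥) :
    (μ (Fin.last n))⁻¹ ≤ sSup (rayleighQuotients A B U) := by
  have : FiniteDimensional ℝ U := Module.finite_of_finrank_pos (by omega)
  obtain ⟨u, hu, hu0, hperp⟩ := exists_ne_zero_mem_forall_eq_zero (U := U) (Finset.Iio (Fin.last n))
    (by simp [hUr]) fun i ↦ innerₛₗ ℝ (A (E i))
  have hle := hE.real_inner_le (Fin.last n) u fun i hi ↦ hperp i (Finset.mem_Iio.mpr hi)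
  have hBu := real_inner_apply_self_pos_of_inf_ker_eq_bot hB hBnn hU hu hu0
  refine (le_csSup (bddAbove_rayleighQuotients hB hBnn hU) ⟨u, hu, hu0, rfl⟩).trans' ?_
  rw [le_div_iff₀ hBu, inv_mul_eq_div, div_le_iff₀' (hE.pos _)]
  exact hle

end

theorem stmt6_general {H : Type*} [NormedAddCommGroup H] [InnerProductSpace ℝ H] [CompleteSpace H]
    (A B : H →L[ℝ] H) (hA : IsSelfAdjoint A) (hB : IsSelfAdjoint B)
    (δ : ℝ) (hδ : 0 < δ) (hcoer : ∀ u : H, δ * ‖u‖ ^ 2 ≤ ⟪A u, u⟫_ℝ)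
    (hBcomp : IsCompactOperator ⇑B) (hBnn : ∀ u : H, 0 ≤ ⟪B u, u⟫_ℝ)
    (j : ℕ) (hj : 1 ≤ j)
    (hU : ∃ U : Submodule ℝ H, Module.finrank ℝ U = j ∧ U ⊓ LinearMap.ker (B : H →ₗ[ℝ] H) = ⊥) :
    let lamj : ℝ := sInf { r : ℝ | ∃ U : Submodule ℝ H,
      Module.finrank ℝ U = j ∧ U ⊓ LinearMap.ker (B : H →ₗ[ℝ] H) = ⊥ ∧
      r = sSup { q : ℝ | ∃ u ∈ U, u ≠ 0 ∧ q = ⟪A u, u⟫_ℝ / ⟪B u, u⟫_ℝ } }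
    0 < lamj ∧ ∃ u : H, u ≠ 0 ∧ A u = lamj • B u := by
  intro lamj
  obtain ⟨U, hUr, hU⟩ := hU
  obtain ⟨n, rfl⟩ : ∃ n, j = n + 1 := ⟨j - 1, by omega⟩
  have : FiniteDimensional ℝ U := Module.finite_of_finrank_pos (by omega)
  obtain ⟨E, μ, hE⟩ := exists_isRayleighEigenfamily hA hB hδ hcoer hBnn hBcomp hU hUr.ge
  have hlam : lamj = (μ (Fin.last n))⁻¹ := by
    refine IsLeast.csInf_eq ⟨⟨Submodule.span ℝ (Set.range E), ?_, hE.span_inf_ker_eq_bot hδ hcoer,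
      (hE.sSup_rayleighQuotients_span hδ hcoer).symm⟩, ?_⟩
    · rw [finrank_span_eq_card hE.linearIndependent, Fintype.card_fin]
    · rintro _ ⟨U', hU'r, hU', rfl⟩
      exact hE.inv_le_sSup_rayleighQuotients hB hBnn hU'r hU'
  refine ⟨hlam ▸ inv_pos.mpr (hE.pos _), E (Fin.last n), hE.ne_zero _, ?_⟩
  rw [hlam, hE.apply_eq, inv_smul_smul₀ (hE.pos _).ne']

/-- Min-max principle for the generalized eigenvalue problem `A u = λ B u`
with `A` bounded self-adjoint coercive and `B` compact self-adjoint non-negative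
with nontrivial range: the value
`λ_j = min_{U, dim U = j, U ∩ Null B = 0} max_{u ∈ U \ 0} (Au,u)/(Bu,u)`
is positive and is a generalized eigenvalue. -/
theorem stmt6 {H : Type*} [NormedAddCommGroup H] [InnerProductSpace ℝ H] [CompleteSpace H]
    (A B : H →L[ℝ] H) (hA : IsSelfAdjoint A) (hB : IsSelfAdjoint B)
    (δ : ℝ) (hδ : 0 < δ) (hcoer : ∀ u : H, δ * ‖u‖ ^ 2 ≤ ⟪A u, u⟫_ℝ)
    (hBcomp : IsCompactOperator ⇑B) (hBnn : ∀ u : H, 0 ≤ ⟪B u, u⟫_ℝ)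
    (hBne : LinearMap.range (B : H →ₗ[ℝ] H) ≠ ⊥)
    (j : ℕ) (hj : 1 ≤ j)
    (hU : ∃ U : Submodule ℝ H, Module.finrank ℝ U = j ∧ U ⊓ LinearMap.ker (B : H →ₗ[ℝ] H) = ⊥) :
    let lamj : ℝ := sInf { r : ℝ | ∃ U : Submodule ℝ H,
      Module.finrank ℝ U = j ∧ U ⊓ LinearMap.ker (B : H →ₗ[ℝ] H) = ⊥ ∧
      r = sSup { q : ℝ | ∃ u ∈ U, u ≠ 0 ∧ q = ⟪A u, u⟫_ℝ / ⟪B u, u⟫_ℝ } }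
    0 < lamj ∧ ∃ u : H, u ≠ 0 ∧ A u = lamj • B u :=
  stmt6_general A B hA hB δ hδ hcoer hBcomp hBnn j hj hU
end

section
/- Let n ∈ ℝ with n > 1 (constant), k > 0, and on a ball B ⊂ ℝ³ suppose u ∈ H₀(curl², B) satisfies the identity 0 = ∫_B (1/(n-1))|∇×∇×u - k²u|² + k⁴|u|² - k²|∇×u|² dx. If N ∈ L^∞(D, ℝ^{3×3}) is symmetric with (N(x)-I)^{-1}ξ·ξ̄ ≤ |ξ|²/(n-1) for all ξ ∈ ℂ³ and a.e. x ∈ D, and u is extended by zero to D ⊃ B̄, then ∫_D (N-I)^{-1}(∇×∇×u - k²u)·(∇×∇×ū - k²ū) + k⁴|u|² - k²|∇×u|² dx ≤ 0. -/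
open Matrix MeasureTheory

/-- Comparison of quadratic forms for eigenfunctions supported in a ball:
here `u` models a function in `H₀(curl², B)` extended by zero to `D` (the whole
measure space), `cc = ∇×∇×u` and `cu = ∇×u`.  If the constant-coefficient
quadratic identity on `B` holds and `(N-I)⁻¹ξ·ξ̄ ≤ |ξ|²/(n-1)` a.e., then the
quadratic form `A_k - k²B` evaluated at `u` over `D` is non-positive. -/
theorem stmt9 {α : Type*} [MeasurableSpace α] (μ : Measure α) (Bs : Set α)
    (n k : ℝ) (hn : 1 < n) (hk : 0 < k)
    (N : α → Matrix (Fin 3) (Fin 3) ℝ)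
    (u cc cu : α → Fin 3 → ℝ)
    (hzero : ∀ x ∉ Bs, u x = 0 ∧ cc x = 0 ∧ cu x = 0)
    (hB : (0 : ℝ) = ∫ x in Bs, ((1 / (n - 1)) * ∑ i, (cc x i - k ^ 2 * u x i) ^ 2
        + k ^ 4 * ∑ i, (u x i) ^ 2 - k ^ 2 * ∑ i, (cu x i) ^ 2) ∂μ)
    (hpt : ∀ᵐ x ∂μ, ∀ v : Fin 3 → ℝ,
      ((N x - 1)⁻¹).mulVec v ⬝ᵥ v ≤ (∑ i, v i ^ 2) / (n - 1))
    (hint1 : Integrable (fun x =>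
      ((N x - 1)⁻¹).mulVec (fun i => cc x i - k ^ 2 * u x i) ⬝ᵥ
          (fun i => cc x i - k ^ 2 * u x i)
        + k ^ 4 * ∑ i, (u x i) ^ 2 - k ^ 2 * ∑ i, (cu x i) ^ 2) μ)
    (hint2 : IntegrableOn (fun x =>
      (1 / (n - 1)) * ∑ i, (cc x i - k ^ 2 * u x i) ^ 2
        + k ^ 4 * ∑ i, (u x i) ^ 2 - k ^ 2 * ∑ i, (cu x i) ^ 2) Bs μ) :
    ∫ x, (((N x - 1)⁻¹).mulVec (fun i => cc x i - k ^ 2 * u x i) ⬝ᵥ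
        (fun i => cc x i - k ^ 2 * u x i)
      + k ^ 4 * ∑ i, (u x i) ^ 2 - k ^ 2 * ∑ i, (cu x i) ^ 2) ∂μ ≤ 0 := by

  set f : α → ℝ := fun x =>
      ((N x - 1)⁻¹).mulVec (fun i => cc x i - k ^ 2 * u x i) ⬝ᵥ
          (fun i => cc x i - k ^ 2 * u x i)
        + k ^ 4 * ∑ i, (u x i) ^ 2 - k ^ 2 * ∑ i, (cu x i) ^ 2 with hf
  set g : α → ℝ := fun x =>
      (1 / (n - 1)) * ∑ i, (cc x i - k ^ 2 * u x i) ^ 2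
        + k ^ 4 * ∑ i, (u x i) ^ 2 - k ^ 2 * ∑ i, (cu x i) ^ 2 with hg
  have hf0 : ∀ x ∉ Bs, f x = 0 := by
    intro x hx
    obtain ⟨h1, h2, h3⟩ := hzero x hx
    simp [hf, h1, h2, h3, Matrix.mulVec_zero]
  have heq : ∫ x, f x ∂μ = ∫ x in Bs, f x ∂μ :=
    (setIntegral_eq_integral_of_forall_compl_eq_zero hf0).symm
  have hle : ∀ᵐ x ∂(μ.restrict Bs), f x ≤ g x := by
    filter_upwards [ae_restrict_of_ae hpt] with x hx
    have := hx (fun i => cc x i - k ^ 2 * u x i)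
    rw [div_eq_mul_inv, mul_comm] at this
    simp only [hf, hg, one_div]
    linarith
  have : ∫ x in Bs, f x ∂μ ≤ ∫ x in Bs, g x ∂μ :=
    integral_mono_ae hint1.restrict hint2 hle
  rw [heq]
  linarith [hB, this]
end
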